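/- arXiv:2109.02893 — 6 statements merged into one kernel-verified Lean document; each statement's English description precedes it below -/
import Mathlib

section
/- Let q be a positive integer, d < ⌈log₂ q⌉ a positive integer, and x ∈ ℤ_q (represented as an integer in [0, q)). Define Compress_q(x,d) = ⌊(2^d/q)·x⌉ mod 2^d and Decompress_q(y,d) = ⌊(q/2^d)·y⌉ mod q. Then for x' = Decompress_q(Compress_q(x,d), d), we have |x' − x mod^± q| ≤ ⌈q/2^{d+1}⌋, where mod^± q reduces to the centered interval around 0 and ⌊·⌉ denotes rounding to the nearest integer. -/
/-- Centered modular reduction: reduces to `(-q/2, q/2]` for even `q` and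
`[-(q-1)/2, (q-1)/2]` for odd `q`. -/
def cmod (x q : ℤ) : ℤ := if 2 * (x % q) > q then x % q - q else x % q

lemma cmod_bound (q W z B : ℤ) (hq : 0 < q) (hdvd : q ∣ (W - z))
    (hz : |z| ≤ B) (hB : 2 * B ≤ q) : |cmod W q| ≤ B := by
  have h1 : q ∣ (W - W % q) := Int.dvd_self_sub_of_emod_eq rfl
  have h2 : q ∣ (W % q - z) := by
    have := dvd_sub hdvd h1
    simpa using this
  obtain ⟨t, ht⟩ := h2
  have hm0 : 0 ≤ W % q := Int.emod_nonneg W (by omega)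
  have hmq : W % q < q := Int.emod_lt_of_pos W hq
  obtain ⟨hz1, hz2⟩ := abs_le.mp hz
  have hBq : B < q := by omega
  have h3 : q * (-1) < q * t := by
    have : q * t = W % q - z := ht.symm
    linarith
  have h4 : q * t < q * 2 := by
    have : q * t = W % q - z := ht.symm
    linarith
  have ht0 : -1 < t := lt_of_mul_lt_mul_left h3 hq.le
  have ht2 : t < 2 := lt_of_mul_lt_mul_left h4 hq.le
  interval_cases t <;> (unfold cmod; rw [abs_le]; constructor <;> (split_ifs <;> omega))

/-- Compression/decompression error bound for Kyber/Aigis-style compression. -/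
theorem compress_decompress_error (q : ℕ) (hq : 0 < q) (d : ℕ) (hd : 0 < d)
    (hdq : d < Nat.clog 2 q) (x : ℤ) (hx0 : 0 ≤ x) (hxq : x < q) :
    |cmod ((round ((q : ℚ) / 2 ^ d *
        ((round ((2 ^ d : ℚ) / q * x) % (2 ^ d : ℤ)) : ℤ)) % (q : ℤ)) - x) q|
      ≤ round ((q : ℚ) / 2 ^ (d + 1)) := by
  have h2dq : 2 ^ d < q := by
    by_contra h
    push_neg at h
    exact absurd ((Nat.clog_le_iff_le_pow (by norm_num)).mpr h) (by omega)
  have hq3 : 3 ≤ q := by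
    have h2 : 2 ≤ 2 ^ d := Nat.one_lt_two_pow (by omega)
    omega
  set c : ℤ := round ((2 ^ d : ℚ) / q * x) with hc
  set c' : ℤ := c % (2 ^ d : ℤ) with hc'
  set k : ℤ := c / (2 ^ d : ℤ) with hk
  set w : ℤ := round ((q : ℚ) / 2 ^ d * (c' : ℚ)) with hw
  set B : ℤ := round ((q : ℚ) / 2 ^ (d + 1)) with hB
  have hqQ : (0:ℚ) < q := by positivity
  have h2Q : (0:ℚ) < 2 ^ d := by positivity
  have hck : c = 2 ^ d * k + c' := (Int.mul_ediv_add_emod c (2 ^ d)).symm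
  have hround : round ((q:ℚ)/2^d * (c:ℚ)) = w + q * k := by
    have he : (q:ℚ)/2^d * (c:ℚ) = (q:ℚ)/2^d * (c':ℚ) + ((q:ℕ) * k : ℤ) := by
      rw [hck]
      push_cast
      field_simp
      ring
    rw [he, round_add_intCast]
  set z : ℤ := round ((q:ℚ)/2^d * (c:ℚ)) - x with hz
  have habs : |z| ≤ B := by
    have h1 : |(c:ℚ) - (2^d:ℚ)/q * x| ≤ 1/2 := by
      have := abs_sub_round ((2^d:ℚ)/(q:ℚ) * (x:ℚ))
      rw [← hc, abs_sub_comm] at this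
      exact this
    have h2 : |((round ((q:ℚ)/2^d * (c:ℚ)) : ℤ) : ℚ) - (q:ℚ)/2^d * c| ≤ 1/2 := by
      have := abs_sub_round ((q:ℚ)/2^d * (c:ℚ))
      rw [abs_sub_comm] at this
      exact this
    have h3 : (q:ℚ)/2^d * c - x = (q:ℚ)/2^d * ((c:ℚ) - (2^d:ℚ)/q * x) := by
      field_simp
    have h3' : |(q:ℚ)/2^d * c - x| ≤ (q:ℚ)/2^(d+1) := by
      rw [h3, abs_mul, abs_of_pos (by positivity : (0:ℚ) < (q:ℚ)/2^d)]
      calc (q:ℚ)/2^d * |(c:ℚ) - (2^d:ℚ)/q * x| ≤ (q:ℚ)/2^d * (1/2) := by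
            apply mul_le_mul_of_nonneg_left h1 (by positivity)
        _ = (q:ℚ)/2^(d+1) := by rw [pow_succ]; ring
    have h4 : |(z:ℚ)| ≤ 1/2 + (q:ℚ)/2^(d+1) := by
      have he : (z:ℚ) = (((round ((q:ℚ)/2^d * (c:ℚ)) : ℤ) : ℚ) - (q:ℚ)/2^d * c)
          + ((q:ℚ)/2^d * c - x) := by
        rw [hz]; push_cast; ring
      rw [he]
      calc |_ + _| ≤ _ := abs_add_le _ _
        _ ≤ 1/2 + (q:ℚ)/2^(d+1) := add_le_add h2 h3'
    rw [abs_le] at h4 ⊢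
    constructor
    · rw [hB, round_eq, neg_le, Int.le_floor]
      have := h4.1
      push_cast at this ⊢
      linarith
    · rw [hB, round_eq, Int.le_floor]
      have := h4.2
      push_cast at this ⊢
      linarith
  have h2B : 2 * B ≤ (q:ℤ) := by
    have h1 : (B:ℚ) ≤ (q:ℚ)/2^(d+1) + 1/2 := by
      rw [hB, round_eq]
      exact_mod_cast Int.floor_le _
    have h2 : (q:ℚ)/2^(d+1) ≤ (q:ℚ)/4 := by
      apply div_le_div_of_nonneg_left hqQ.le (by norm_num)
      calc (4:ℚ) = 2^2 := by norm_num
        _ ≤ 2^(d+1) := by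
            apply pow_le_pow_right₀ (by norm_num)
            omega
    have hq3' : (3:ℚ) ≤ q := by exact_mod_cast hq3
    have : (2*B : ℚ) ≤ q := by push_cast; linarith
    exact_mod_cast this
  have hdvd : (q:ℤ) ∣ ((w % q - x) - z) := by
    have he : (w % q - x) - z = -(w - w % q) - q * k := by
      rw [hz, hround]; ring
    rw [he]
    exact dvd_sub ((Int.dvd_self_sub_of_emod_eq rfl).neg_right) (dvd_mul_right _ _)
  exact cmod_bound q (w % q - x) z B (by exact_mod_cast hq) hdvd habs h2B
end

section
/- Let q > 1 and a be positive integers, and let s be an integer with 2^s > a·q. Set b = ⌈2^s / q⌉. Then ⌊a/q⌋ = (a·b) >> s, i.e., ⌊a/q⌋ = ⌊a·b / 2^s⌋. -/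
/-!
Write `a = q m + t` with `0 ≤ t < q` and `q b = 2^s + e` with `0 ≤ e < q`. Then
`q (a b) = a 2^s + a e`, and since `a e < a q < 2^s ≤ (q - t) 2^s`, this lies in
`[q m 2^s, q (m + 1) 2^s)`; dividing by `q` pins `a b / 2^s = m`.
-/

namespace Int

theorem le_mul_ceil_div {d q : ℤ} (hq : 0 < q) : d ≤ q * ⌈(d : ℚ) / q⌉ := by
  have hq' : (0 : ℚ) < q := by exact_mod_cast hq
  have h := Int.le_ceil ((d : ℚ) / q)
  rw [div_le_iff₀ hq'] at h
  exact_mod_cast (by linarith : (d : ℚ) ≤ q * ⌈(d : ℚ) / q⌉)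

theorem mul_ceil_div_lt_add {d q : ℤ} (hq : 0 < q) : q * ⌈(d : ℚ) / q⌉ < d + q := by
  have hq' : (0 : ℚ) < q := by exact_mod_cast hq
  have h := Int.ceil_lt_add_one ((d : ℚ) / q)
  rw [← sub_lt_iff_lt_add, lt_div_iff₀ hq'] at h
  exact_mod_cast (by linarith : (q : ℚ) * ⌈(d : ℚ) / q⌉ < d + q)

theorem ediv_eq_mul_ediv_of_mul_lt {a q b d : ℤ} (ha : 0 ≤ a) (hq : 0 < q)
    (hb_lower : d ≤ q * b) (hb_upper : q * b < d + q) (had : a * q < d) :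
    a / q = a * b / d := by
  have hd : 0 < d := lt_of_le_of_lt (mul_nonneg ha hq.le) had
  have hb : 0 ≤ b := by nlinarith
  have hdecomp : q * (a / q) + a % q = a := Int.mul_ediv_add_emod a q
  have hm : 0 ≤ a / q := Int.ediv_nonneg ha hq.le
  have ht : 0 ≤ a % q := Int.emod_nonneg a hq.ne'
  have htq : a % q < q := Int.emod_lt_of_pos a hq
  rw [eq_comm, Int.ediv_eq_iff_of_pos hd]
  constructor
  · calc a / q * d ≤ a / q * (q * b) := mul_le_mul_of_nonneg_left hb_lower hm
      _ ≤ a * b := by nlinarith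
  · refine lt_of_mul_lt_mul_right ?_ hq.le
    calc a * b * q = a * (q * b) := by ring
      _ < a * d + d := by nlinarith
      _ ≤ a * d + (q - a % q) * d := by nlinarith
      _ = (a / q * d + d) * q := by linear_combination (-d) * hdecomp

end Int

/-- Barrett division: `⌊a/q⌋ = ⌊a·b / 2^s⌋` where `b = ⌈2^s/q⌉` and `2^s > a·q`. -/
theorem barrett_division (q a : ℤ) (hq : 1 < q) (ha : 0 < a) (s : ℕ)
    (hs : a * q < 2 ^ s) :
    a / q = a * ⌈(2 ^ s : ℚ) / q⌉ / 2 ^ s := by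
  have hq0 : 0 < q := by omega
  have hcast : (2 ^ s : ℚ) = ((2 ^ s : ℤ) : ℚ) := by norm_cast
  rw [hcast]
  exact Int.ediv_eq_mul_ediv_of_mul_lt ha.le hq0 (Int.le_mul_ceil_div hq0)
    (Int.mul_ceil_div_lt_add hq0) hs
end

section
/- Let R be a commutative ring and n an even positive integer. Every f ∈ R[x]/(x^n+1) can be uniquely written as f = f_e(x²) + x·f_o(x²) where f_e, f_o are polynomials of degree < n/2, and for f = f_e(x²)+x f_o(x²), g = g_e(x²)+x g_o(x²), the product h = f·g in R[x]/(x^n+1) satisfies h = h_e(x²) + x·h_o(x²) where h_e = f_e g_e + y·f_o g_o and h_o = f_e g_o + f_o g_e, with multiplication of f_e, f_o, g_e, g_o taken in R[y]/(y^{n/2}+1). -/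
open Polynomial

/-- Coefficients of an even/odd recombination. -/
lemma eo_coeff {R : Type*} [CommRing R] (a b : R[X]) (k : ℕ) :
    (a.comp (X ^ 2) + X * b.comp (X ^ 2)).coeff (2 * k) = a.coeff k ∧
    (a.comp (X ^ 2) + X * b.comp (X ^ 2)).coeff (2 * k + 1) = b.coeff k := by
  simp only [← expand_eq_comp_X_pow, coeff_add]
  constructor
  · rw [coeff_expand_mul' (by norm_num)]
    rcases Nat.eq_zero_or_pos k with hk | hk
    · subst hk; simp [mul_comm X, coeff_mul_X_zero]
    · have h2 : 2 * k = (2 * k - 1) + 1 := by omega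
      rw [h2, coeff_X_mul, coeff_expand (by norm_num)]
      have : ¬ (2 ∣ 2 * k - 1) := by omega
      simp [this]
  · rw [coeff_X_mul, coeff_expand_mul' (by norm_num), coeff_expand (by norm_num)]
    have : ¬ (2 ∣ 2 * k + 1) := by omega
    simp [this]

lemma eo_degree_lt {R : Type*} [CommRing R] {m : ℕ} {a b : R[X]}
    (ha : a.degree < (m : ℕ)) (hb : b.degree < (m : ℕ)) :
    (a.comp (X ^ 2) + X * b.comp (X ^ 2)).degree < ((2 * m : ℕ) : WithBot ℕ) := by
  rw [degree_lt_iff_coeff_zero] at ha hb ⊢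
  intro k hk
  rcases Nat.even_or_odd k with ⟨t, ht⟩ | ⟨t, ht⟩
  · have hk2 : k = 2 * t := by omega
    rw [hk2, (eo_coeff a b t).1, ha t (by omega)]
  · have hk2 : k = 2 * t + 1 := by omega
    rw [hk2, (eo_coeff a b t).2, hb t (by omega)]

lemma monic_xpow_add_one {R : Type*} [CommRing R] {m : ℕ} (hm : 0 < m) :
    Monic ((X : R[X]) ^ m + 1) := by
  apply monic_X_pow_add
  calc degree (1 : R[X]) ≤ 0 := degree_one_le
  _ < (m : WithBot ℕ) := by exact_mod_cast hm

/-- Key: modByMonic commutes with the even/odd recombination. -/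
lemma eo_modByMonic {R : Type*} [CommRing R] (m : ℕ) (hm : 0 < m) (A B : R[X]) :
    (A.comp (X ^ 2) + X * B.comp (X ^ 2)) %ₘ ((X : R[X]) ^ (2 * m) + 1) =
      (A %ₘ ((X : R[X]) ^ m + 1)).comp (X ^ 2) +
        X * (B %ₘ ((X : R[X]) ^ m + 1)).comp (X ^ 2) := by
  rcases subsingleton_or_nontrivial R with h | h
  · exact Subsingleton.elim _ _
  set d : R[X] := X ^ m + 1 with hd
  have hdm : Monic d := monic_xpow_add_one hm
  have hdm2 : Monic ((X : R[X]) ^ (2 * m) + 1) := monic_xpow_add_one (by omega)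
  have hdc : d.comp (X ^ 2) = (X : R[X]) ^ (2 * m) + 1 := by
    simp [hd, ← pow_mul, mul_comm m 2]
  have hA := modByMonic_add_div A d
  have hB := modByMonic_add_div B d
  have main : (A %ₘ d).comp (X ^ 2) + X * (B %ₘ d).comp (X ^ 2) +
      ((X : R[X]) ^ (2 * m) + 1) * ((A /ₘ d).comp (X ^ 2) + X * (B /ₘ d).comp (X ^ 2)) =
      A.comp (X ^ 2) + X * B.comp (X ^ 2) := by
    conv_rhs => rw [← hA, ← hB]
    rw [← hdc]
    simp only [add_comp, mul_comp]
    ring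
  have hdeg : ((A %ₘ d).comp (X ^ 2) + X * (B %ₘ d).comp (X ^ 2)).degree <
      degree ((X : R[X]) ^ (2 * m) + 1) := by
    have hdd : degree ((X : R[X]) ^ (2 * m) + 1) = ((2 * m : ℕ) : WithBot ℕ) := by
      rw [← C_1]; exact degree_X_pow_add_C (by omega) 1
    have hdd1 : d.degree = (m : WithBot ℕ) := by
      rw [hd, ← C_1]; exact degree_X_pow_add_C hm 1
    rw [hdd]
    exact eo_degree_lt (hdd1 ▸ degree_modByMonic_lt A hdm)
      (hdd1 ▸ degree_modByMonic_lt B hdm)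
  exact (div_modByMonic_unique _ _ hdm2 ⟨main, hdeg⟩).2

/-- Even/odd decomposition of negacyclic multiplication: every `f` of degree `< n` is
uniquely `f_e(x²) + x·f_o(x²)` with `deg f_e, deg f_o < n/2`, and the product
`h = f·g mod (xⁿ+1)` has even part `f_e g_e + y·f_o g_o` and odd part
`f_e g_o + f_o g_e`, computed in `R[y]/(y^{n/2}+1)`. -/
theorem negacyclic_even_odd_decomposition {R : Type*} [CommRing R]
    (n : ℕ) (hn : Even n) (hpos : 0 < n)
    (f g : R[X]) (hf : f.degree < n) (hg : g.degree < n) :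
    (∃! p : R[X] × R[X],
      p.1.degree < (n / 2 : ℕ) ∧ p.2.degree < (n / 2 : ℕ) ∧
        f = p.1.comp (X ^ 2) + X * p.2.comp (X ^ 2)) ∧
    ∀ fe fo ge go : R[X],
      fe.degree < (n / 2 : ℕ) → fo.degree < (n / 2 : ℕ) →
      ge.degree < (n / 2 : ℕ) → go.degree < (n / 2 : ℕ) →
      f = fe.comp (X ^ 2) + X * fo.comp (X ^ 2) →
      g = ge.comp (X ^ 2) + X * go.comp (X ^ 2) →
      (f * g) %ₘ ((X : R[X]) ^ n + 1) =
        ((fe * ge + X * (fo * go)) %ₘ ((X : R[X]) ^ (n / 2) + 1)).comp (X ^ 2) +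
          X * ((fe * go + fo * ge) %ₘ ((X : R[X]) ^ (n / 2) + 1)).comp (X ^ 2) := by
  obtain ⟨t, ht⟩ := hn
  have hm2 : n = 2 * (n / 2) := by omega
  set m := n / 2 with hmdef
  have hm : 0 < m := by omega
  rw [degree_lt_iff_coeff_zero] at hf
  constructor
  · -- existence and uniqueness of the decomposition
    set fe : R[X] := ∑ i ∈ Finset.range m, monomial i (f.coeff (2 * i)) with hfe
    set fo : R[X] := ∑ i ∈ Finset.range m, monomial i (f.coeff (2 * i + 1)) with hfo
    have coeff_fe : ∀ k, fe.coeff k = if k < m then f.coeff (2 * k) else 0 := by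
      intro k
      rw [hfe, finset_sum_coeff]
      simp [coeff_monomial, Finset.sum_ite_eq']
    have coeff_fo : ∀ k, fo.coeff k = if k < m then f.coeff (2 * k + 1) else 0 := by
      intro k
      rw [hfo, finset_sum_coeff]
      simp [coeff_monomial, Finset.sum_ite_eq']
    have hdfe : fe.degree < (m : ℕ) := by
      rw [degree_lt_iff_coeff_zero]
      intro k hk; rw [coeff_fe, if_neg (by omega)]
    have hdfo : fo.degree < (m : ℕ) := by
      rw [degree_lt_iff_coeff_zero]
      intro k hk; rw [coeff_fo, if_neg (by omega)]
    have hdecomp : f = fe.comp (X ^ 2) + X * fo.comp (X ^ 2) := by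
      ext k
      rcases Nat.even_or_odd k with ⟨s, hs⟩ | ⟨s, hs⟩
      · have hk2 : k = 2 * s := by omega
        rw [hk2, (eo_coeff fe fo s).1, coeff_fe]
        by_cases hsm : s < m
        · rw [if_pos hsm]
        · rw [if_neg hsm, hf (2 * s) (by omega)]
      · have hk2 : k = 2 * s + 1 := by omega
        rw [hk2, (eo_coeff fe fo s).2, coeff_fo]
        by_cases hsm : s < m
        · rw [if_pos hsm]
        · rw [if_neg hsm, hf (2 * s + 1) (by omega)]
    refine ⟨⟨fe, fo⟩, ⟨hdfe, hdfo, hdecomp⟩, ?_⟩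
    rintro ⟨qe, qo⟩ ⟨h1, h2, h3⟩
    rw [degree_lt_iff_coeff_zero] at h1 h2
    have e1 : ∀ k, f.coeff (2 * k) = qe.coeff k := fun k => by
      rw [h3]; exact (eo_coeff _ _ k).1
    have e2 : ∀ k, f.coeff (2 * k + 1) = qo.coeff k := fun k => by
      rw [h3]; exact (eo_coeff _ _ k).2
    have : qe = fe := by
      ext k
      rw [coeff_fe, ← e1]
      by_cases hk : k < m
      · rw [if_pos hk]
      · rw [if_neg hk, e1, h1 k (by omega)]
    have h2' : qo = fo := by
      ext k
      rw [coeff_fo, ← e2]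
      by_cases hk : k < m
      · rw [if_pos hk]
      · rw [if_neg hk, e2, h2 k (by omega)]
    simp [this, h2']
  · -- the multiplication formula
    intro fe fo ge go _ _ _ _ hfe hge
    have hfg : f * g = (fe * ge + X * (fo * go)).comp (X ^ 2) +
        X * (fe * go + fo * ge).comp (X ^ 2) := by
      rw [hfe, hge]
      simp only [add_comp, mul_comp, X_comp]
      ring
    rw [hfg, show n = 2 * m from hm2]
    exact eo_modByMonic m hm _ _
end

section
/- For nonnegative integers α, β with α + β ≥ 2, the function T_m(α,β) = 3·2^{α+β−3} + 2^{α−2} + 3·2^{β−3} + 2^{α−β−2} − (3/2)(α+β) + 5/4 (the coefficient of n in the multiplication count of H-NTT, ignoring the common (3/2)n log n term) attains its minimum over {(α,β) : α ≥ 0, β ≥ 0} ∩ (feasible region) at (α,β) = (1,1), where it equals 5/4. -/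
/-!
Writing `a = 2^α`, `b = 2^β` and `s = α + β`, the only negative term of `Tm α β` is `-(3/2) s`,
and it is absorbed by the term `(3/8) a b = (3/8) 2^s` as soon as `4 s ≤ 2^s`, i.e. for `s ≥ 4`.
The remaining pairs with `s ∈ {2, 3}` are checked directly.
-/

/-- Coefficient of `n` in the multiplication count of H-NTT. -/
noncomputable def Tm (α β : ℕ) : ℚ :=
  3 * (2 : ℚ) ^ ((α : ℤ) + (β : ℤ) - 3) + (2 : ℚ) ^ ((α : ℤ) - 2) +
    3 * (2 : ℚ) ^ ((β : ℤ) - 3) + (2 : ℚ) ^ ((α : ℤ) - (β : ℤ) - 2) -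
    (3 / 2) * ((α : ℚ) + (β : ℚ)) + 5 / 4

lemma Tm_eq (α β : ℕ) : Tm α β =
    3 * 2 ^ α * 2 ^ β / 8 + 2 ^ α / 4 + 3 * 2 ^ β / 8 + 2 ^ α / (4 * 2 ^ β)
      - 3 / 2 * ((α : ℚ) + β) + 5 / 4 := by
  have h2 : (2 : ℚ) ≠ 0 := two_ne_zero
  rw [Tm, show (α : ℤ) + β - 3 = α + β + (-3) by ring, show (α : ℤ) - 2 = α + (-2) by ring,
    show (β : ℤ) - 3 = β + (-3) by ring, show (α : ℤ) - β - 2 = α + -(β : ℤ) + (-2) by ring]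
  simp only [zpow_add₀ h2, zpow_neg, zpow_natCast]
  field_simp
  ring

lemma Nat.four_mul_le_two_pow {s : ℕ} (hs : 4 ≤ s) : 4 * s ≤ 2 ^ s := by
  induction s, hs using Nat.le_induction with
  | base => norm_num
  | succ s hs ih => rw [pow_succ]; omega

lemma five_div_four_lt_Tm {α β : ℕ} (h : 4 ≤ α + β) : 5 / 4 < Tm α β := by
  have hlin : 3 / 2 * ((α : ℚ) + β) ≤ 3 * 2 ^ α * 2 ^ β / 8 := by
    have := Nat.four_mul_le_two_pow h
    rw [pow_add] at this
    have : 4 * ((α : ℚ) + β) ≤ 2 ^ α * 2 ^ β := by exact_mod_cast this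
    linarith
  have hrest : 0 < (2 : ℚ) ^ α / 4 + 3 * 2 ^ β / 8 + 2 ^ α / (4 * 2 ^ β) := by positivity
  rw [Tm_eq]
  linarith

/-- The H-NTT multiplication-count coefficient attains its minimum `5/4` at `(α,β) = (1,1)`. -/
theorem Tm_min : Tm 1 1 = 5 / 4 ∧ ∀ α β : ℕ, 2 ≤ α + β → Tm 1 1 ≤ Tm α β := by
  have h11 : Tm 1 1 = 5 / 4 := by norm_num [Tm_eq]
  refine ⟨h11, fun α β h => ?_⟩
  rw [h11]
  rcases Nat.lt_or_ge (α + β) 4 with hs | hs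
  · have hα : α ≤ 3 := by omega
    have hβ : β ≤ 3 := by omega
    interval_cases α <;> interval_cases β <;> first | omega | norm_num [Tm_eq]
  · exact (five_div_four_lt_Tm hs).le
end

section
/- Let q be an odd prime, m = 2, g = 2^{d_v}, and let ε' = q/m − ⌊q/m⌉ ∈ [−1/2, 1/2]. Let k ∈ {0,1} and let Err be an integer. If |(m/q)(Err − ε'·k)| < 1/2 (as rational numbers, with the centered representative), then ⌊k + (m/q)(Err − ε'·k)⌉ mod m = k. Equivalently, the simplified decryption k' = ⌊m(v_i/g − σ_{1,i}/q)⌉ mod m recovers k whenever −q/(2m) + ε'(m−1) ≤ Err < q/(2m) (when ε' ≥ 0) or −q/(2m) ≤ Err < q/(2m) + ε'(m−1) (when ε' < 0), where (q/g)v_i − σ_{1,i} = ⌊q/m⌉k + Err. -/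
/-- Correctness of the simplified AKCN-based decryption: with `m = 2`,
`ε' = q/m − ⌊q/m⌉`, `k ∈ {0,1}` and integer error `Err`, if
`|(m/q)(Err − ε'·k)| < 1/2` then `⌊k + (m/q)(Err − ε'·k)⌉ mod m = k`. -/
theorem akcn_decryption_correct (q : ℕ) (hq : q.Prime) (hodd : Odd q)
    (m : ℤ) (hm : m = 2) (ε' : ℚ) (hε : ε' = (q : ℚ) / m - round ((q : ℚ) / m))
    (k : ℤ) (hk : k = 0 ∨ k = 1) (Err : ℤ)
    (h : |(m : ℚ) / q * ((Err : ℚ) - ε' * k)| < 1 / 2) :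
    round ((k : ℚ) + (m : ℚ) / q * ((Err : ℚ) - ε' * k)) % m = k := by
  set x : ℚ := (m : ℚ) / q * ((Err : ℚ) - ε' * k) with hx
  have h0 : round x = 0 := by
    rw [round_eq_zero_iff]
    constructor
    · linarith [abs_lt.mp h |>.1]
    · linarith [abs_lt.mp h |>.2]
  have : round ((k : ℚ) + x) = k := by
    rw [add_comm, round_add_intCast, h0, zero_add]
  rw [this, hm]
  rcases hk with hk | hk <;> simp [hk]
end

section
/- Let R be a commutative ring, n a positive integer, α ≥ 0, and set N = n/2^α (assume 2^α | n). For f ∈ R[x]/(x^n + 1), write f(x) = Σ_{i=0}^{2^α−1} x^i \tilde{f}_i(x^{2^α}) with \tilde{f}_i of degree < N, and similarly for g. Then h = fg in R[x]/(x^n+1) satisfies h(x) = Σ_{i=0}^{2^α−1} x^i \tilde{h}_i(x^{2^α}), where in R[y]/(y^N + 1): \tilde{h}_i = Σ_{l=0}^{i} \tilde{f}_l \tilde{g}_{i−l} + y · Σ_{l=i+1}^{2^α−1} \tilde{f}_l \tilde{g}_{2^α + i − l}. -/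
open Polynomial Finset

private lemma negacyclic_key {R : Type*} [CommRing R] (m : ℕ) (F G : ℕ → R[X]) :
    (∑ i ∈ range m, X ^ i * F i) * (∑ j ∈ range m, X ^ j * G j) =
      ∑ k ∈ range m, ∑ l ∈ range m,
        (if l ≤ k then X ^ k * (F l * G (k - l))
          else X ^ (k + m) * (F l * G (m + k - l))) := by
  rw [Finset.sum_mul_sum, ← Finset.sum_product', ← Finset.sum_product']
  refine Finset.sum_nbij' (fun p => ((p.1 + p.2) % m, p.1))
      (fun p => (p.2, if p.2 ≤ p.1 then p.1 - p.2 else m + p.1 - p.2)) ?_ ?_ ?_ ?_ ?_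
  · rintro ⟨i, j⟩ hp
    simp only [mem_product, mem_range] at hp ⊢
    exact ⟨Nat.mod_lt _ (by omega), hp.1⟩
  · rintro ⟨k, l⟩ hp
    simp only [mem_product, mem_range] at hp ⊢
    refine ⟨hp.2, ?_⟩
    split <;> omega
  · rintro ⟨i, j⟩ hp
    simp only [mem_product, mem_range] at hp
    dsimp only
    rcases lt_or_ge (i + j) m with h | h
    · simp [Nat.mod_eq_of_lt h]
    · have hmod : (i + j) % m = i + j - m := by
        rw [Nat.mod_eq_sub_mod h, Nat.mod_eq_of_lt (by omega)]
      rw [hmod, if_neg (by omega)]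
      rw [Prod.mk.injEq]
      exact ⟨rfl, by omega⟩
  · rintro ⟨k, l⟩ hp
    simp only [mem_product, mem_range] at hp
    dsimp only
    rcases le_or_gt l k with h | h
    · rw [if_pos h]
      rw [Prod.mk.injEq, show l + (k - l) = k by omega, Nat.mod_eq_of_lt hp.1]
      exact ⟨rfl, rfl⟩
    · rw [if_neg (by omega)]
      rw [Prod.mk.injEq, show l + (m + k - l) = m + k by omega, Nat.add_mod_left, Nat.mod_eq_of_lt hp.1]
      exact ⟨rfl, rfl⟩
  · rintro ⟨i, j⟩ hp
    simp only [mem_product, mem_range] at hp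
    dsimp only
    rcases lt_or_ge (i + j) m with h | h
    · rw [Nat.mod_eq_of_lt h, if_pos (by omega), show i + j - i = j by omega, pow_add]
      ring
    · have hmod : (i + j) % m = i + j - m := by
        rw [Nat.mod_eq_sub_mod h, Nat.mod_eq_of_lt (by omega)]
      rw [hmod, if_neg (by omega), show i + j - m + m = i + j by omega,
        show m + (i + j - m) - i = j by omega, pow_add]
      ring

/-- General `2^α`-way decomposition of negacyclic multiplication: if
`f = Σᵢ xⁱ·f̃ᵢ(x^{2^α})` and `g = Σᵢ xⁱ·g̃ᵢ(x^{2^α})` with each part of degree `< N = n/2^α`,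
then `h = f·g mod (xⁿ+1)` equals `Σᵢ xⁱ·h̃ᵢ(x^{2^α})`, where in `R[y]/(y^N+1)`
`h̃ᵢ = Σ_{l≤i} f̃_l g̃_{i−l} + y·Σ_{l>i} f̃_l g̃_{2^α+i−l}`. -/
theorem negacyclic_pow_decomposition {R : Type*} [CommRing R]
    (n α : ℕ) (hpos : 0 < n) (hdvd : 2 ^ α ∣ n)
    (f g : R[X]) (ftil gtil : ℕ → R[X])
    (hfdeg : ∀ i < 2 ^ α, (ftil i).degree < (n / 2 ^ α : ℕ))
    (hgdeg : ∀ i < 2 ^ α, (gtil i).degree < (n / 2 ^ α : ℕ))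
    (hf : f = ∑ i ∈ range (2 ^ α), X ^ i * (ftil i).comp (X ^ (2 ^ α)))
    (hg : g = ∑ i ∈ range (2 ^ α), X ^ i * (gtil i).comp (X ^ (2 ^ α))) :
    (f * g) %ₘ ((X : R[X]) ^ n + 1) =
      ∑ i ∈ range (2 ^ α),
        X ^ i *
          (((∑ l ∈ range (i + 1), ftil l * gtil (i - l)) +
              X * ∑ l ∈ Finset.Ico (i + 1) (2 ^ α), ftil l * gtil (2 ^ α + i - l))
            %ₘ ((X : R[X]) ^ (n / 2 ^ α) + 1)).comp (X ^ (2 ^ α)) := by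
  rcases subsingleton_or_nontrivial R with hR | hR
  · exact Subsingleton.elim _ _
  set m := 2 ^ α with hmdef
  set N := n / 2 ^ α with hNdef
  have hm0 : 0 < m := pow_pos (by norm_num) α
  have hmn : m * N = n := Nat.mul_div_cancel' hdvd
  have hN0 : 0 < N := Nat.div_pos (Nat.le_of_dvd hpos hdvd) hm0
  have hmonN : ((X : R[X]) ^ N + 1).Monic :=
    monic_X_pow_add (lt_of_le_of_lt degree_one_le (by exact_mod_cast hN0))
  have hmonn : ((X : R[X]) ^ n + 1).Monic :=
    monic_X_pow_add (lt_of_le_of_lt degree_one_le (by exact_mod_cast hpos))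
  have key : f * g = ∑ k ∈ range m, X ^ k *
      (((∑ l ∈ range (k + 1), ftil l * gtil (k - l)) +
        X * ∑ l ∈ Finset.Ico (k + 1) m, ftil l * gtil (m + k - l)).comp (X ^ m)) := by
    rw [hf, hg, negacyclic_key]
    refine Finset.sum_congr rfl fun k hk => ?_
    rw [mem_range] at hk
    have split : (∑ l ∈ range m, if l ≤ k then
          X ^ k * ((ftil l).comp (X ^ m) * (gtil (k - l)).comp (X ^ m))
        else X ^ (k + m) * ((ftil l).comp (X ^ m) * (gtil (m + k - l)).comp (X ^ m)))
        = (∑ l ∈ range (k + 1), X ^ k * ((ftil l).comp (X ^ m) * (gtil (k - l)).comp (X ^ m)))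
          + ∑ l ∈ Finset.Ico (k + 1) m,
              X ^ (k + m) * ((ftil l).comp (X ^ m) * (gtil (m + k - l)).comp (X ^ m)) := by
      rw [range_eq_Ico, ← Finset.sum_Ico_consecutive _ (Nat.zero_le (k + 1))
        (by omega : k + 1 ≤ m), ← range_eq_Ico]
      congr 1
      · exact Finset.sum_congr rfl fun l hl => if_pos (by rw [mem_range] at hl; omega)
      · exact Finset.sum_congr rfl fun l hl => if_neg (by rw [mem_Ico] at hl; omega)
    rw [split]
    simp only [add_comp, mul_comp, X_comp, Polynomial.sum_comp, mul_add, Finset.mul_sum,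
      ← mul_assoc, ← pow_add]
  have hdegN : ((X : R[X]) ^ N + 1).degree = (N : WithBot ℕ) := by
    have h : ((X : R[X]) ^ N + 1) = X ^ N + C 1 := by rw [map_one]
    rw [h, degree_X_pow_add_C hN0]
  have hdegn : ((X : R[X]) ^ n + 1).degree = (n : WithBot ℕ) := by
    have h : ((X : R[X]) ^ n + 1) = X ^ n + C 1 := by rw [map_one]
    rw [h, degree_X_pow_add_C hpos]
  have hdecomp : ∀ p : R[X], p.comp (X ^ m) =
      ((X : R[X]) ^ n + 1) * ((p /ₘ (X ^ N + 1)).comp (X ^ m)) +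
        (p %ₘ (X ^ N + 1)).comp (X ^ m) := fun p => by
    conv_lhs => rw [← modByMonic_add_div p (X ^ N + 1)]
    rw [add_comp, mul_comp, add_comp, pow_comp, X_comp, one_comp, ← pow_mul, hmn]
    ring
  have hterm : ∀ k < m, ∀ p : R[X],
      (X ^ k * ((p %ₘ ((X : R[X]) ^ N + 1)).comp (X ^ m))).degree < (n : WithBot ℕ) := by
    intro k hk p
    set r := p %ₘ ((X : R[X]) ^ N + 1) with hrdef
    have hrd : r.natDegree ≤ N - 1 := by
      rcases eq_or_ne r 0 with h0 | h0
      · simp [h0]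
      · have h1 : r.degree < ((X : R[X]) ^ N + 1).degree := degree_modByMonic_lt _ hmonN
        rw [hdegN, degree_eq_natDegree h0, Nat.cast_lt] at h1
        omega
    have h3 : (X ^ k * (r.comp (X ^ m))).natDegree ≤ k + r.natDegree * m := by
      refine le_trans natDegree_mul_le ?_
      have h4 := natDegree_comp_le (p := r) (q := (X : R[X]) ^ m)
      simp only [natDegree_X_pow] at h4 ⊢
      omega
    refine lt_of_le_of_lt degree_le_natDegree ?_
    rw [Nat.cast_lt]
    have h5 : r.natDegree * m ≤ (N - 1) * m := Nat.mul_le_mul_right _ hrd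
    have h8 : k + r.natDegree * m ≤ (m - 1) + (N - 1) * m := Nat.add_le_add (by omega) h5
    have h9 : (m - 1) + (N - 1) * m < n := by
      have h6 : (N - 1) * m = N * m - 1 * m := Nat.sub_mul N 1 m
      have h7 : N * m = n := by rw [mul_comm]; exact hmn
      have h10 : m ≤ n := Nat.le_of_dvd hpos hdvd
      omega
    omega
  refine (div_modByMonic_unique
      (∑ i ∈ range m, X ^ i * ((((∑ l ∈ range (i + 1), ftil l * gtil (i - l)) +
        X * ∑ l ∈ Finset.Ico (i + 1) m, ftil l * gtil (m + i - l)) /ₘ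
          ((X : R[X]) ^ N + 1)).comp (X ^ m)))
      _ hmonn ⟨?_, ?_⟩).2
  · rw [key, Finset.mul_sum, ← Finset.sum_add_distrib]
    refine Finset.sum_congr rfl fun k _ => ?_
    rw [hdecomp ((∑ l ∈ range (k + 1), ftil l * gtil (k - l)) +
      X * ∑ l ∈ Finset.Ico (k + 1) m, ftil l * gtil (m + k - l))]
    ring
  · rw [hdegn]
    refine lt_of_le_of_lt (degree_sum_le _ _) ?_
    rw [Finset.sup_lt_iff (by exact_mod_cast WithBot.bot_lt_coe n)]
    intro i hi
    exact hterm i (mem_range.mp hi) _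
end
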